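/- Second moment bound: For the q-Lagrange-Hermite operator, R_{n,q}^{α⁽¹⁾,…,α⁽ʳ⁾}(s²; x) ≤ q·(x αₙ⁽¹⁾)² + x αₙ⁽¹⁾/[n]_q for all x ∈ [0,1], 0 < q < 1, αₙ⁽ᵏ⁾ ∈ (0,1). -/

import Mathlib

open Filter

/-- The q-integer `[m]_q = (1 - q^m)/(1 - q)`. -/
noncomputable def qInt (q : ℝ) (m : ℕ) : ℝ := (1 - q ^ m) / (1 - q)

/-- The q-Pochhammer symbol `(ρ;q)_m = ∏_{j=0}^{m-1} (1 - ρ qʲ)`. -/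
noncomputable def qPoch (ρ q : ℝ) (m : ℕ) : ℝ := ∏ j ∈ Finset.range m, (1 - ρ * q ^ j)

/-- The multivariate q-Lagrange-Hermite operator
`R_{n,q}^{α⁽¹⁾,…,α⁽ʳ⁾}(g;x)`, written as an absolutely rearranged sum over the
multi-indices `l = (l₁,…,l_r)` with `x^{l₁+2l₂+⋯+r·l_r}`. -/
noncomputable def LHOp (q : ℝ) (n r : ℕ) (hr : 0 < r) (α : Fin r → ℝ)
    (g : ℝ → ℝ) (x : ℝ) : ℝ :=
  (∏ i : Fin r, qPoch (α i * x ^ ((i : ℕ) + 1)) q n) *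
    ∑' l : Fin r → ℕ,
      (∏ k : Fin r, qPoch (q ^ n) q (l k) * α k ^ (l k) / qPoch q q (l k)) *
        g (qInt q (l ⟨0, hr⟩) / qInt q (n + l ⟨0, hr⟩ - 1)) *
        x ^ (∑ k : Fin r, ((k : ℕ) + 1) * l k)


/-!
Put `tₖ = α⁽ᵏ⁾ xᵏ`. The weights of `R_{n,q}` are products of the q-binomial series
`∑ₘ [n+m-1 choose m]_q tₖᵐ = 1/(tₖ;q)_n`, and `g` only sees `l₁`, so `R_{n,q}` collapses to a
one-variable operator in `t = t₁`. Its nodes `sₘ = [m]_q/[n+m-1]_q` satisfy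
`[n+m-1 choose m]_q sₘ = [n+m-2 choose m-1]_q`, which shifts the series and gives the moments
`∑ [n+m-1 choose m]_q tᵐ sₘ = t/(t;q)_n` and `∑ [n+m-1 choose m]_q tᵐ sₘ sₘ₋₁ = t²/(t;q)_n`.
The pointwise bound `sₘ² ≤ sₘ/[n]_q + q sₘ sₘ₋₁`, from `[m]_q = 1 + q[m-1]_q`, finishes the proof.
-/


section qInt

variable {q : ℝ}

lemma qInt_nonneg (hq0 : 0 ≤ q) (hq1 : q ≤ 1) (m : ℕ) : 0 ≤ qInt q m :=
  div_nonneg (sub_nonneg.2 (pow_le_one₀ hq0 hq1)) (sub_nonneg.2 hq1)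

lemma qInt_pos (hq0 : 0 ≤ q) (hq1 : q < 1) {m : ℕ} (hm : m ≠ 0) : 0 < qInt q m :=
  div_pos (sub_pos.2 (pow_lt_one₀ hq0 hq1 hm)) (sub_pos.2 hq1)

lemma qInt_mono (hq0 : 0 ≤ q) (hq1 : q ≤ 1) : Monotone (qInt q) := fun _ _ h =>
  div_le_div_of_nonneg_right (sub_le_sub_left (pow_le_pow_of_le_one hq0 hq1 h) 1)
    (sub_nonneg.2 hq1)

lemma qInt_succ (hq1 : q ≠ 1) (m : ℕ) : qInt q (m + 1) = 1 + q * qInt q m := by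
  have : 1 - q ≠ 0 := sub_ne_zero.2 hq1.symm
  unfold qInt
  field_simp
  ring

end qInt

section qPoch

variable {q : ℝ}

lemma qPoch_zero (ρ q : ℝ) : qPoch ρ q 0 = 1 := rfl

lemma qPoch_succ (ρ q : ℝ) (m : ℕ) : qPoch ρ q (m + 1) = qPoch ρ q m * (1 - ρ * q ^ m) :=
  Finset.prod_range_succ _ _

lemma qPoch_succ' (ρ q : ℝ) (m : ℕ) : qPoch ρ q (m + 1) = (1 - ρ) * qPoch (ρ * q) q m := by
  simp only [qPoch, Finset.prod_range_succ', pow_zero, mul_one, pow_succ, mul_assoc, mul_comm]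

lemma qPoch_self_succ (q : ℝ) (m : ℕ) : qPoch q q (m + 1) = qPoch q q m * (1 - q ^ (m + 1)) := by
  rw [qPoch_succ, pow_succ']

lemma qPoch_nonneg (hq0 : 0 ≤ q) (hq1 : q ≤ 1) {ρ : ℝ} (hρ0 : 0 ≤ ρ) (hρ1 : ρ ≤ 1) (m : ℕ) :
    0 ≤ qPoch ρ q m :=
  Finset.prod_nonneg fun _ _ => sub_nonneg.2 <|
    (mul_le_of_le_one_right hρ0 (pow_le_one₀ hq0 hq1)).trans hρ1

lemma qPoch_pos (hq0 : 0 ≤ q) (hq1 : q ≤ 1) {ρ : ℝ} (hρ0 : 0 ≤ ρ) (hρ1 : ρ < 1) (m : ℕ) :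
    0 < qPoch ρ q m :=
  Finset.prod_pos fun _ _ => sub_pos.2 <|
    (mul_le_of_le_one_right hρ0 (pow_le_one₀ hq0 hq1)).trans_lt hρ1

end qPoch

/-- `[n+m-1 choose m]_q`, the coefficient of `tᵐ` in `1/(t;q)_n`. -/
noncomputable def qNegBinom (q : ℝ) (n m : ℕ) : ℝ := qPoch (q ^ n) q m / qPoch q q m

section qNegBinom

variable {q : ℝ}

lemma qNegBinom_zero_right (q : ℝ) (n : ℕ) : qNegBinom q n 0 = 1 := by
  simp [qNegBinom, qPoch_zero]

lemma qNegBinom_zero_left (q : ℝ) {m : ℕ} (hm : m ≠ 0) : qNegBinom q 0 m = 0 := by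
  obtain ⟨m, rfl⟩ := Nat.exists_eq_succ_of_ne_zero hm
  simp [qNegBinom, qPoch_succ']

lemma qNegBinom_nonneg (hq0 : 0 ≤ q) (hq1 : q < 1) (n m : ℕ) : 0 ≤ qNegBinom q n m :=
  div_nonneg (qPoch_nonneg hq0 hq1.le (pow_nonneg hq0 n) (pow_le_one₀ hq0 hq1.le) m)
    (qPoch_nonneg hq0 hq1.le hq0 hq1.le m)

lemma qNegBinom_succ (hq0 : 0 ≤ q) (hq1 : q < 1) (n m : ℕ) :
    qNegBinom q n (m + 1) = qNegBinom q n m * ((1 - q ^ (n + m)) / (1 - q ^ (m + 1))) := by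
  have h₁ : 1 - q ^ (m + 1) ≠ 0 := (sub_pos.2 (pow_lt_one₀ hq0 hq1 m.succ_ne_zero)).ne'
  have h₂ : qPoch q q m ≠ 0 := (qPoch_pos hq0 hq1.le hq0 hq1 m).ne'
  rw [qNegBinom, qNegBinom, qPoch_self_succ, qPoch_succ, ← pow_add]
  field_simp

lemma qNegBinom_succ_succ (hq0 : 0 ≤ q) (hq1 : q < 1) (n m : ℕ) :
    qNegBinom q (n + 1) (m + 1) = qNegBinom q n (m + 1) + q ^ n * qNegBinom q (n + 1) m := by
  have h₁ : 1 - q ^ (m + 1) ≠ 0 := (sub_pos.2 (pow_lt_one₀ hq0 hq1 m.succ_ne_zero)).ne'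
  have h₂ : qPoch q q m ≠ 0 := (qPoch_pos hq0 hq1.le hq0 hq1 m).ne'
  rw [qNegBinom, qNegBinom, qNegBinom, qPoch_self_succ, qPoch_succ (q ^ (n + 1)),
    qPoch_succ' (q ^ n), ← pow_succ, ← pow_add]
  field_simp
  ring

lemma summable_qNegBinom_mul_pow (hq0 : 0 ≤ q) (hq1 : q < 1) (n : ℕ) {t : ℝ} (ht0 : 0 ≤ t)
    (ht1 : t < 1) : Summable fun m => qNegBinom q n m * t ^ m := by
  -- the ratio of consecutive terms is at most `t / (1 - q^(m+1)) → t < 1`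
  refine summable_of_ratio_norm_eventually_le (r := (1 + t) / 2) (by linarith) ?_
  have hsmall : ∀ᶠ m : ℕ in atTop, q ^ (m + 1) < (1 - t) / (1 + t) :=
    ((tendsto_pow_atTop_nhds_zero_of_lt_one hq0 hq1).comp (tendsto_add_atTop_nat 1)).eventually
      (gt_mem_nhds (div_pos (by linarith) (by linarith)))
  filter_upwards [hsmall] with m hm
  have hpos : 0 < 1 - q ^ (m + 1) := sub_pos.2 (pow_lt_one₀ hq0 hq1 m.succ_ne_zero)
  have hratio : t * ((1 - q ^ (n + m)) / (1 - q ^ (m + 1))) ≤ (1 + t) / 2 := by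
    rw [← mul_div_assoc, div_le_div_iff₀ hpos two_pos]
    have := (lt_div_iff₀ (by linarith : (0 : ℝ) < 1 + t)).1 hm
    nlinarith [mul_nonneg ht0 (pow_nonneg hq0 (n + m))]
  have hterm := mul_nonneg (qNegBinom_nonneg hq0 hq1 n m) (pow_nonneg ht0 m)
  rw [Real.norm_of_nonneg hterm, Real.norm_of_nonneg (mul_nonneg
    (qNegBinom_nonneg hq0 hq1 n _) (pow_nonneg ht0 _)), qNegBinom_succ hq0 hq1, pow_succ]
  calc qNegBinom q n m * ((1 - q ^ (n + m)) / (1 - q ^ (m + 1))) * (t ^ m * t)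
      = qNegBinom q n m * t ^ m * (t * ((1 - q ^ (n + m)) / (1 - q ^ (m + 1)))) := by ring
    _ ≤ qNegBinom q n m * t ^ m * ((1 + t) / 2) := mul_le_mul_of_nonneg_left hratio hterm
    _ = (1 + t) / 2 * (qNegBinom q n m * t ^ m) := mul_comm _ _

/-- The q-binomial theorem. -/
theorem hasSum_qNegBinom_mul_pow (hq0 : 0 ≤ q) (hq1 : q < 1) {t : ℝ} (ht0 : 0 ≤ t)
    (ht1 : t < 1) (n : ℕ) : HasSum (fun m => qNegBinom q n m * t ^ m) (qPoch t q n)⁻¹ := by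
  induction n with
  | zero =>
    rw [qPoch_zero, inv_one]
    convert hasSum_ite_eq 0 (1 : ℝ) with m
    split_ifs with hm
    · simp [hm, qNegBinom_zero_right]
    · simp [qNegBinom_zero_left q hm]
  | succ n ih =>
    obtain ⟨T, hT⟩ := summable_qNegBinom_mul_pow hq0 hq1 (n + 1) ht0 ht1
    -- Pascal's rule gives `T - 1 = ((t;q)_n⁻¹ - 1) + qⁿ t T`
    have htail : HasSum (fun m => qNegBinom q (n + 1) (m + 1) * t ^ (m + 1)) (T - 1) := by
      simpa [qNegBinom_zero_right] using (hasSum_nat_add_iff' 1).2 hT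
    have htail' : HasSum (fun m => qNegBinom q (n + 1) (m + 1) * t ^ (m + 1))
        (((qPoch t q n)⁻¹ - 1) + q ^ n * t * T) := by
      have h := ((hasSum_nat_add_iff' 1).2 ih).add (hT.mul_left (q ^ n * t))
      simp only [Finset.sum_range_one, qNegBinom_zero_right, pow_zero, mul_one] at h
      refine h.congr_fun fun m => ?_
      rw [qNegBinom_succ_succ hq0 hq1, pow_succ]
      ring
    have hT' : T = (qPoch t q n * (1 - t * q ^ n))⁻¹ := by
      have hne : 1 - t * q ^ n ≠ 0 :=
        (sub_pos.2 ((mul_le_of_le_one_right ht0 (pow_le_one₀ hq0 hq1.le)).trans_lt ht1)).ne'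
      have heq : T * (1 - t * q ^ n) = (qPoch t q n)⁻¹ := by
        linear_combination htail.unique htail'
      rw [mul_inv, ← heq]
      field_simp
    rwa [qPoch_succ, ← hT']

end qNegBinom

/-- The node at which `LHOp` samples `g` when `l₁ = m`. -/
noncomputable def lhNode (q : ℝ) (n m : ℕ) : ℝ := qInt q m / qInt q (n + m - 1)

section lhNode

variable {q : ℝ}

lemma lhNode_zero (q : ℝ) (n : ℕ) : lhNode q n 0 = 0 := by simp [lhNode, qInt]

lemma lhNode_nonneg (hq0 : 0 ≤ q) (hq1 : q ≤ 1) (n m : ℕ) : 0 ≤ lhNode q n m :=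
  div_nonneg (qInt_nonneg hq0 hq1 m) (qInt_nonneg hq0 hq1 _)

lemma lhNode_le_one (hq0 : 0 ≤ q) (hq1 : q < 1) {n : ℕ} (hn : n ≠ 0) (m : ℕ) :
    lhNode q n m ≤ 1 := by
  rcases eq_or_ne m 0 with rfl | hm
  · simp [lhNode_zero]
  · exact div_le_one_of_le₀ (qInt_mono hq0 hq1.le (by omega)) (qInt_nonneg hq0 hq1.le _)

lemma qNegBinom_succ_mul_lhNode_succ (hq0 : 0 ≤ q) (hq1 : q < 1) {n : ℕ} (hn : n ≠ 0) (m : ℕ) :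
    qNegBinom q n (m + 1) * lhNode q n (m + 1) = qNegBinom q n m := by
  have h₁ : 1 - q ^ (m + 1) ≠ 0 := (sub_pos.2 (pow_lt_one₀ hq0 hq1 m.succ_ne_zero)).ne'
  have h₂ : 1 - q ^ (n + m) ≠ 0 := (sub_pos.2 (pow_lt_one₀ hq0 hq1 (by omega))).ne'
  have h₃ : 1 - q ≠ 0 := (sub_pos.2 hq1).ne'
  rw [qNegBinom_succ hq0 hq1, lhNode, show n + (m + 1) - 1 = n + m by omega, qInt, qInt]
  field_simp

/-- The split `[m+1]_q = 1 + q [m]_q`, with `1/[n+m]_q ≤ 1/[n]_q` and `[n+m-1]_q ≤ [n+m]_q`. -/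
lemma lhNode_succ_le (hq0 : 0 ≤ q) (hq1 : q < 1) {n : ℕ} (hn : n ≠ 0) (m : ℕ) :
    lhNode q n (m + 1) ≤ (qInt q n)⁻¹ + q * lhNode q n m := by
  rw [lhNode, show n + (m + 1) - 1 = n + m by omega, qInt_succ hq1.ne, add_div, mul_div_assoc]
  gcongr
  · rw [one_div]
    exact inv_anti₀ (qInt_pos hq0 hq1 hn) (qInt_mono hq0 hq1.le (Nat.le_add_right n m))
  · rcases eq_or_ne m 0 with rfl | hm
    · simp [lhNode_zero, qInt]
    · exact div_le_div_of_nonneg_left (qInt_nonneg hq0 hq1.le m) (qInt_pos hq0 hq1 (by omega))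
        (qInt_mono hq0 hq1.le (by omega))

lemma lhNode_sq_le (hq0 : 0 ≤ q) (hq1 : q < 1) {n : ℕ} (hn : n ≠ 0) (m : ℕ) :
    lhNode q n m ^ 2 ≤ lhNode q n m * ((qInt q n)⁻¹ + q * lhNode q n (m - 1)) := by
  rw [sq]
  rcases m with _ | m
  · simp [lhNode_zero]
  · exact mul_le_mul_of_nonneg_left (lhNode_succ_le hq0 hq1 hn m) (lhNode_nonneg hq0 hq1.le n _)

end lhNode

theorem hasSum_mul_mul_comp_pred {R : Type*} [CommRing R] [TopologicalSpace R]
    [IsTopologicalRing R] {a w h : ℕ → R} {t S : R} (hw : w 0 = 0)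
    (hshift : ∀ m, a (m + 1) * w (m + 1) = t * a m) (hS : HasSum (fun m => a m * h m) S) :
    HasSum (fun m => a m * w m * h (m - 1)) (t * S) := by
  rw [← hasSum_nat_add_iff' 1]
  simpa [hw, hshift, mul_assoc] using hS.mul_left t

theorem hasSum_fin_prod {ι : Type*} {r : ℕ} {f : Fin r → ι → ℝ} {S : Fin r → ℝ}
    (hf0 : ∀ k m, 0 ≤ f k m) (hf : ∀ k, HasSum (f k) (S k)) :
    HasSum (fun l : Fin r → ι => ∏ k, f k (l k)) (∏ k, S k) := by
  induction r with
  | zero => simp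
  | succ r ih =>
    set tail : (Fin r → ι) → ℝ := fun l => ∏ k : Fin r, f k.succ (l k)
    have htail : HasSum tail (∏ k : Fin r, S k.succ) :=
      ih (fun k m => hf0 k.succ m) (fun k => hf k.succ)
    have hsum : Summable fun p : ι × (Fin r → ι) => f 0 p.1 * tail p.2 :=
      (hf 0).summable.mul_of_nonneg htail.summable (hf0 0)
        fun l => Finset.prod_nonneg fun k _ => hf0 k.succ (l k)
    have hprod := (hf 0).mul htail hsum
    rw [Fin.prod_univ_succ, ← (Fin.consEquiv fun _ => ι).hasSum_iff]
    simpa [Function.comp_def, Fin.prod_univ_succ] using hprod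

section moments

variable {q t : ℝ} {n : ℕ}

theorem qPoch_mul_le_of_hasSum_lhNode_sq (hq0 : 0 ≤ q) (hq1 : q < 1) (hn : n ≠ 0) (ht0 : 0 ≤ t)
    (ht1 : t < 1) {A : ℝ} (hA : HasSum (fun m => qNegBinom q n m * t ^ m * lhNode q n m ^ 2) A) :
    qPoch t q n * A ≤ q * t ^ 2 + t / qInt q n := by
  set a : ℕ → ℝ := fun m => qNegBinom q n m * t ^ m
  set P := qPoch t q n
  have hP : 0 < P := qPoch_pos hq0 hq1.le ht0 ht1 n
  have ha : ∀ m, 0 ≤ a m := fun m => mul_nonneg (qNegBinom_nonneg hq0 hq1 n m) (pow_nonneg ht0 m)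
  have hshift : ∀ m, a (m + 1) * lhNode q n (m + 1) = t * a m := fun m => by
    simp only [a, ← qNegBinom_succ_mul_lhNode_succ hq0 hq1 hn m, pow_succ]
    ring
  have hzeroth : HasSum (fun m => a m * 1) P⁻¹ := by
    simpa using hasSum_qNegBinom_mul_pow hq0 hq1 ht0 ht1 n
  have hfirst : HasSum (fun m => a m * lhNode q n m) (t * P⁻¹) := by
    simpa using hasSum_mul_mul_comp_pred (lhNode_zero q n) hshift hzeroth
  have hsecond : HasSum (fun m => a m * lhNode q n m * lhNode q n (m - 1)) (t * (t * P⁻¹)) :=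
    hasSum_mul_mul_comp_pred (lhNode_zero q n) hshift hfirst
  have hA_le : A ≤ t * P⁻¹ / qInt q n + q * (t * (t * P⁻¹)) := by
    refine hasSum_le (fun m => ?_) hA ((hfirst.div_const _).add (hsecond.mul_left q))
    calc a m * lhNode q n m ^ 2
        ≤ a m * (lhNode q n m * ((qInt q n)⁻¹ + q * lhNode q n (m - 1))) :=
          mul_le_mul_of_nonneg_left (lhNode_sq_le hq0 hq1 hn m) (ha m)
      _ = a m * lhNode q n m / qInt q n + q * (a m * lhNode q n m * lhNode q n (m - 1)) := by
          ring
  calc P * A ≤ P * (t * P⁻¹ / qInt q n + q * (t * (t * P⁻¹))) :=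
        mul_le_mul_of_nonneg_left hA_le hP.le
    _ = q * t ^ 2 + t / qInt q n := by
        field_simp
        ring

end moments

/-- Since `g` is sampled at a node depending on `l₁` only, the multiple series factorises and
the factors `k ≠ 1` cancel against `(α⁽ᵏ⁾ x^k; q)_n` by the q-binomial theorem. -/
theorem LHOp_eq_qPoch_mul {q : ℝ} (hq0 : 0 ≤ q) (hq1 : q < 1) {n r : ℕ} (hr : 0 < r)
    {α : Fin r → ℝ} (hα : ∀ i, α i ∈ Set.Ico (0 : ℝ) 1) {x : ℝ} (hx : x ∈ Set.Icc (0 : ℝ) 1)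
    {g : ℝ → ℝ} (hg : ∀ m, 0 ≤ g (lhNode q n m)) {A : ℝ}
    (hA : HasSum (fun m => qNegBinom q n m * (x * α ⟨0, hr⟩) ^ m * g (lhNode q n m)) A) :
    LHOp q n r hr α g x = qPoch (x * α ⟨0, hr⟩) q n * A := by
  set i₀ : Fin r := ⟨0, hr⟩
  set t : Fin r → ℝ := fun k => α k * x ^ ((k : ℕ) + 1)
  have hti₀ : t i₀ = x * α i₀ := by simp [t, i₀, mul_comm]
  have ht0 : ∀ k, 0 ≤ t k := fun k => mul_nonneg (hα k).1 (pow_nonneg hx.1 _)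
  have ht1 : ∀ k, t k < 1 := fun k =>
    (mul_le_of_le_one_right (hα k).1 (pow_le_one₀ hx.1 hx.2)).trans_lt (hα k).2
  set f : Fin r → ℕ → ℝ := fun k m =>
    qNegBinom q n m * t k ^ m * if k = i₀ then g (lhNode q n m) else 1
  have hf0 : ∀ k m, 0 ≤ f k m := fun k m => by
    refine mul_nonneg (mul_nonneg (qNegBinom_nonneg hq0 hq1 n m) (pow_nonneg (ht0 k) m)) ?_
    split_ifs
    exacts [hg m, zero_le_one]
  have hf : ∀ k, HasSum (f k) (if k = i₀ then A else (qPoch (t k) q n)⁻¹) := fun k => by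
    by_cases hk : k = i₀
    · subst hk
      simpa [f, hti₀] using hA
    · simpa [f, hk] using hasSum_qNegBinom_mul_pow hq0 hq1 (ht0 k) (ht1 k) n
  have hsummand : ∀ l : Fin r → ℕ,
      (∏ k, qPoch (q ^ n) q (l k) * α k ^ (l k) / qPoch q q (l k)) *
        g (qInt q (l i₀) / qInt q (n + l i₀ - 1)) * x ^ (∑ k : Fin r, ((k : ℕ) + 1) * l k) =
      ∏ k, f k (l k) := fun l => by
    simp only [f]
    rw [Finset.prod_mul_distrib, Fintype.prod_ite_eq', ← Finset.prod_pow_eq_pow_sum,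
      mul_right_comm, ← Finset.prod_mul_distrib]
    congr 1
    refine Finset.prod_congr rfl fun k _ => ?_
    rw [qNegBinom, mul_pow, ← pow_mul, mul_comm _ (l k)]
    ring
  have hcancel : ∀ k ≠ i₀, qPoch (t k) q n * (if k = i₀ then A else (qPoch (t k) q n)⁻¹) = 1 :=
    fun k hk => by simp [hk, (qPoch_pos hq0 hq1.le (ht0 k) (ht1 k) n).ne']
  rw [LHOp, tsum_congr hsummand, (hasSum_fin_prod hf0 hf).tsum_eq, ← Finset.prod_mul_distrib,
    Finset.prod_eq_single i₀ (fun k _ hk => hcancel k hk) (by simp), if_pos rfl]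
  exact congrArg (qPoch · q n * A) hti₀

/-- Second moment bound: `R_{n,q}(s²;x) ≤ q (x α⁽¹⁾)² + x α⁽¹⁾/[n]_q`. -/
theorem stmt14 (q : ℝ) (hq : 0 < q) (hq1 : q < 1) (r : ℕ) (hr : 0 < r)
    (α : Fin r → ℝ) (hα : ∀ i, α i ∈ Set.Ioo (0 : ℝ) 1) (x : ℝ)
    (hx : x ∈ Set.Icc (0 : ℝ) 1) (n : ℕ) (hn : 1 ≤ n) :
    LHOp q n r hr α (fun s => s ^ 2) x ≤
      q * (x * α ⟨0, hr⟩) ^ 2 + x * α ⟨0, hr⟩ / qInt q n := by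
  have hn0 : n ≠ 0 := Nat.one_le_iff_ne_zero.1 hn
  set t := x * α ⟨0, hr⟩
  have ht0 : 0 ≤ t := mul_nonneg hx.1 (hα _).1.le
  have ht1 : t < 1 := (mul_le_of_le_one_left (hα _).1.le hx.2).trans_lt (hα _).2
  obtain ⟨A, hA⟩ : Summable fun m => qNegBinom q n m * t ^ m * lhNode q n m ^ 2 :=
    (summable_qNegBinom_mul_pow hq.le hq1 n ht0 ht1).of_nonneg_of_le
      (fun m => mul_nonneg (mul_nonneg (qNegBinom_nonneg hq.le hq1 n m) (pow_nonneg ht0 m))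
        (sq_nonneg _))
      fun m => mul_le_of_le_one_right
        (mul_nonneg (qNegBinom_nonneg hq.le hq1 n m) (pow_nonneg ht0 m))
        (pow_le_one₀ (lhNode_nonneg hq.le hq1.le n m) (lhNode_le_one hq.le hq1 hn0 m))
  rw [LHOp_eq_qPoch_mul (g := fun s => s ^ 2) hq.le hq1 hr
    (fun i => Set.Ioo_subset_Ico_self (hα i)) hx (fun m => sq_nonneg (lhNode q n m)) hA]
  exact qPoch_mul_le_of_hasSum_lhNode_sq hq.le hq1 hn0 ht0 ht1 hA
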